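/- arXiv:2008.01130 — 4 statements merged into one kernel-verified Lean document; each statement's English description precedes it below -/
import Mathlib

section
/- Let $X_\theta$ have a Gamma$(\theta, 1)$ distribution with shape $\theta > 0$. Then for every $x > 0$: $P(X_\theta > \theta + \sqrt{2\theta x} + x) \le e^{-x}$ and $P(X_\theta < \theta - \sqrt{2\theta x}) \le e^{-x}$. -/
open MeasureTheory ProbabilityTheory Real

/-!
Chernoff's bound with the exact moment generating function `(1 - t)^(-θ)` of `Gamma(θ, 1)`,
`t < 1`: tilting the density by `e^(t u)` gives a multiple of the `Gamma(θ, 1 - t)` density.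
With `z = √(2θx)`, the upper tail takes `t = z / (z + θ)` and uses `log y ≤ sinh (log y)`;
the lower tail takes `t = -z / θ` and uses `2w / (w + 2) ≤ log (1 + w)`.
-/

theorem log_one_add_le_of_nonneg {w : ℝ} (hw : 0 ≤ w) :
    log (1 + w) ≤ w * (w + 2) / (2 * (1 + w)) := by
  have hpos : 0 < 1 + w := by linarith
  have h := self_le_sinh_iff.mpr (log_nonneg (by linarith : (1 : ℝ) ≤ 1 + w))
  rw [sinh_eq, exp_neg, exp_log hpos] at h
  convert h using 1
  field_simp
  ring

theorem measure_le_exp_mul_lintegral_exp (μ : Measure ℝ) {S : Set ℝ} {t c : ℝ}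
    (hS : ∀ u ∈ S, t * c ≤ t * u) :
    μ S ≤ ENNReal.ofReal (exp (-(t * c))) * ∫⁻ u, ENNReal.ofReal (exp (t * u)) ∂μ := by
  have hmeas : Measurable fun u : ℝ => ENNReal.ofReal (exp (t * (u - c))) := by fun_prop
  calc μ S ≤ μ {u | 1 ≤ ENNReal.ofReal (exp (t * (u - c)))} := by
        refine measure_mono fun u hu => ?_
        simpa [mul_sub] using hS u hu
    _ = 1 * μ {u | 1 ≤ ENNReal.ofReal (exp (t * (u - c)))} := (one_mul _).symm
    _ ≤ ∫⁻ u, ENNReal.ofReal (exp (t * (u - c))) ∂μ :=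
        mul_meas_ge_le_lintegral₀ hmeas.aemeasurable 1
    _ = ∫⁻ u, ENNReal.ofReal (exp (-(t * c))) * ENNReal.ofReal (exp (t * u)) ∂μ := by
        congr with u
        rw [← ENNReal.ofReal_mul (exp_nonneg _), ← exp_add]
        ring_nf
    _ = _ := lintegral_const_mul _ (by fun_prop)

theorem lintegral_exp_mul_gammaMeasure {a r t : ℝ} (ha : 0 < a) (hr : 0 ≤ r) (ht : t < r) :
    ∫⁻ u, ENNReal.ofReal (exp (t * u)) ∂gammaMeasure a r =
      ENNReal.ofReal ((r / (r - t)) ^ a) := by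
  have hrt : 0 < r - t := by linarith
  have tilt : ∀ u, gammaPDF a r u * ENNReal.ofReal (exp (t * u)) =
      ENNReal.ofReal ((r / (r - t)) ^ a) * gammaPDF a (r - t) u := by
    intro u
    rcases lt_or_ge u 0 with hu | hu
    · simp [gammaPDF_of_neg hu]
    rw [gammaPDF_of_nonneg hu, gammaPDF_of_nonneg hu, ← ENNReal.ofReal_mul (by positivity),
      ← ENNReal.ofReal_mul (by positivity)]
    congr 1
    have hpow : (r / (r - t)) ^ a * (r - t) ^ a = r ^ a := by
      rw [← mul_rpow (by positivity) hrt.le, div_mul_cancel₀ _ hrt.ne']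
    have hexp : exp (-(r * u)) * exp (t * u) = exp (-((r - t) * u)) := by
      rw [← exp_add]; ring_nf
    rw [← hpow, ← hexp]
    ring
  have hmeas : ∀ r, Measurable (gammaPDF a r) := fun r =>
    (measurable_gammaPDFReal a r).ennreal_ofReal
  rw [gammaMeasure, lintegral_withDensity_eq_lintegral_mul _ (hmeas r) (by fun_prop)]
  simp only [Pi.mul_apply, tilt]
  rw [lintegral_const_mul _ (hmeas (r - t)),
    lintegral_gammaPDF_eq_one ha hrt, mul_one]

theorem gammaMeasure_le_exp_of_forall_mul_le {a t c : ℝ} {S : Set ℝ} (ha : 0 < a) (ht : t < 1)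
    (hS : ∀ u ∈ S, t * c ≤ t * u) :
    gammaMeasure a 1 S ≤ ENNReal.ofReal (exp (a * log (1 / (1 - t)) - t * c)) := by
  have h1t : 0 < 1 / (1 - t) := by apply div_pos one_pos; linarith
  refine (measure_le_exp_mul_lintegral_exp _ hS).trans_eq ?_
  rw [lintegral_exp_mul_gammaMeasure ha zero_le_one ht, ← ENNReal.ofReal_mul (exp_nonneg _),
    rpow_def_of_pos h1t, ← exp_add]
  ring_nf

theorem gammaMeasure_Ioi_le {θ z : ℝ} (hθ : 0 < θ) (hz : 0 ≤ z) :
    gammaMeasure θ 1 (Set.Ioi (θ + z + z ^ 2 / (2 * θ))) ≤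
      ENNReal.ofReal (exp (-(z ^ 2 / (2 * θ)))) := by
  have hzθ : 0 < z + θ := by linarith
  have ht : z / (z + θ) < 1 := by rw [div_lt_one hzθ]; linarith
  refine (gammaMeasure_le_exp_of_forall_mul_le hθ ht fun u hu =>
    mul_le_mul_of_nonneg_left (le_of_lt hu) (by positivity)).trans ?_
  refine ENNReal.ofReal_le_ofReal (exp_le_exp.mpr ?_)
  have hlog := log_one_add_le_of_nonneg (div_nonneg hz hθ.le)
  rw [show 1 / (1 - z / (z + θ)) = 1 + z / θ by
    field_simp [hθ.ne', hzθ.ne']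
    ring]
  calc θ * log (1 + z / θ) - z / (z + θ) * (θ + z + z ^ 2 / (2 * θ))
      ≤ θ * (z / θ * (z / θ + 2) / (2 * (1 + z / θ)))
          - z / (z + θ) * (θ + z + z ^ 2 / (2 * θ)) := by gcongr
    _ = -(z ^ 2 / (2 * θ)) := by field_simp; ring

theorem gammaMeasure_Iio_le {θ z : ℝ} (hθ : 0 < θ) (hz : 0 ≤ z) :
    gammaMeasure θ 1 (Set.Iio (θ - z)) ≤ ENNReal.ofReal (exp (-(z ^ 2 / (2 * θ)))) := by
  have hw : 0 ≤ z / θ := div_nonneg hz hθ.le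
  refine (gammaMeasure_le_exp_of_forall_mul_le hθ (t := -(z / θ)) (by linarith) fun u hu =>
    mul_le_mul_of_nonpos_left (le_of_lt hu) (by linarith)).trans ?_
  refine ENNReal.ofReal_le_ofReal (exp_le_exp.mpr ?_)
  have hlog := le_log_one_add_of_nonneg hw
  rw [show 1 / (1 - -(z / θ)) = (1 + z / θ)⁻¹ by ring, log_inv]
  calc θ * -log (1 + z / θ) - -(z / θ) * (θ - z)
      ≤ θ * -(2 * (z / θ) / (z / θ + 2)) - -(z / θ) * (θ - z) := by gcongr
    _ ≤ -(z ^ 2 / (2 * θ)) := by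
        rw [← sub_nonneg]
        field_simp
        ring_nf
        positivity

/-- Exponential tail inequalities for the Gamma(θ,1) distribution:
`P(X > θ + √(2θx) + x) ≤ e^{-x}` and `P(X < θ - √(2θx)) ≤ e^{-x}` for all `x > 0`. -/
theorem gamma_tail_bounds (θ : ℝ) (hθ : 0 < θ) (x : ℝ) (hx : 0 < x) :
    gammaMeasure θ 1 {u : ℝ | θ + Real.sqrt (2 * θ * x) + x < u}
        ≤ ENNReal.ofReal (Real.exp (-x)) ∧
    gammaMeasure θ 1 {u : ℝ | u < θ - Real.sqrt (2 * θ * x)}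
        ≤ ENNReal.ofReal (Real.exp (-x)) := by
  have hz : 0 ≤ √(2 * θ * x) := sqrt_nonneg _
  have hx_eq : √(2 * θ * x) ^ 2 / (2 * θ) = x := by
    rw [sq_sqrt (by positivity)]; field_simp
  constructor
  · have h := gammaMeasure_Ioi_le hθ hz
    rw [hx_eq] at h
    exact h
  · have h := gammaMeasure_Iio_le hθ hz
    rw [hx_eq] at h
    exact h
end

section
/- Let $V_n \sim \mathrm{Beta}(a, n)$ with $a > 0$ fixed, and let $t_n \to t \in [0,1)$ be a real sequence. Then $\mathbb{E}\, e^{n t_n V_n} \to (1-t)^{-a}$ as $n \to \infty$. In particular, if $t_n \to 0$ then $\mathbb{E}\, e^{n t_n V_n} \to 1$. -/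
open MeasureTheory Filter Real Set Topology

/-!
Substituting `v = u / n` turns `n ^ a` times the integral `∫₀¹ e^{n c v} v^{a-1} (1-v)^{n-1} dv`
into `∫₀ⁿ e^{c u} u^{a-1} (1 - u/n)^{n-1} du`. Since `(1 - u/n)^{n-1} ≤ e^{1-u}` and
`(1 - u/n)^{n-1} → e^{-u}`, dominated convergence (with `tₙ ≤ s < 1` eventually) sends this
integral with `c = tₙ` to `∫₀^∞ e^{t u} u^{a-1} e^{-u} du = (1-t)^{-a} Γ(a)`. The numerator and
the denominator (`c = 0`) carry the same factor `n ^ a`, so their ratio tends to `(1-t)^{-a}`.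
-/

lemma setIntegral_Ioo_comp_div {E : Type*} [NormedAddCommGroup E] [NormedSpace ℝ E]
    (f : ℝ → E) {c : ℝ} (hc : 0 < c) :
    ∫ u in Ioo 0 c, f (u / c) = c • ∫ v in Ioo 0 1, f v := by
  rw [← integral_Ioc_eq_integral_Ioo, ← integral_Ioc_eq_integral_Ioo,
    ← intervalIntegral.integral_of_le hc.le, ← intervalIntegral.integral_of_le zero_le_one,
    intervalIntegral.integral_comp_div f hc.ne', zero_div, div_self hc.ne']

lemma rpow_mul_setIntegral_exp_mul_beta_kernel (a c : ℝ) {x : ℝ} (hx : 0 < x) :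
    x ^ a * ∫ v in Ioo 0 1, exp (x * c * v) * v ^ (a - 1) * (1 - v) ^ (x - 1)
      = ∫ u in Ioo 0 x, exp (c * u) * u ^ (a - 1) * (1 - u / x) ^ (x - 1) := by
  have hscale : ∀ u ∈ Ioo 0 x, exp (c * u) * u ^ (a - 1) * (1 - u / x) ^ (x - 1)
      = x ^ (a - 1) * (exp (x * c * (u / x)) * (u / x) ^ (a - 1) * (1 - u / x) ^ (x - 1)) := by
    intro u hu
    have hxa : x ^ (a - 1) ≠ 0 := (rpow_pos_of_pos hx _).ne'
    rw [div_rpow hu.1.le hx.le, show x * c * (u / x) = c * u by field_simp]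
    field_simp
  rw [setIntegral_congr_fun measurableSet_Ioo hscale, integral_const_mul,
    setIntegral_Ioo_comp_div (fun v => exp (x * c * v) * v ^ (a - 1) * (1 - v) ^ (x - 1)) hx,
    smul_eq_mul, ← mul_assoc, ← rpow_add_one hx.ne', sub_add_cancel]

lemma one_sub_div_rpow_sub_one_le_exp {u x : ℝ} (hux : u ≤ x) (hx : 1 ≤ x) :
    (1 - u / x) ^ (x - 1) ≤ exp (1 - u) := by
  have hx0 : 0 < x := by linarith
  have hux' : u / x ≤ 1 := (div_le_one hx0).2 hux
  calc (1 - u / x) ^ (x - 1) ≤ exp (-(u / x)) ^ (x - 1) :=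
        rpow_le_rpow (by linarith) (by linarith [add_one_le_exp (-(u / x))]) (by linarith)
    _ = exp (u / x - u) := by
        rw [← exp_mul]
        congr 1
        field_simp
        ring
    _ ≤ exp (1 - u) := exp_le_exp.2 (by linarith)

lemma tendsto_one_sub_div_rpow_sub_one_atTop (u : ℝ) :
    Tendsto (fun x : ℝ => (1 - u / x) ^ (x - 1)) atTop (𝓝 (exp (-u))) := by
  have hbase : Tendsto (fun x : ℝ => 1 - u / x) atTop (𝓝 1) := by
    simpa using tendsto_const_nhds.sub (tendsto_const_nhds.div_atTop (tendsto_id (α := ℝ)))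
  have hquot := (tendsto_one_add_div_rpow_exp (-u)).div hbase one_ne_zero
  rw [div_one] at hquot
  refine hquot.congr' ?_
  filter_upwards [hbase.eventually (lt_mem_nhds one_pos)] with x hx
  rw [Pi.div_apply, rpow_sub_one hx.ne', neg_div, ← sub_eq_add_neg]

lemma norm_exp_mul_rpow_mul_one_sub_div_rpow_le {a c s u x : ℝ} (hcs : c ≤ s) (hu : 0 < u)
    (hux : u ≤ x) (hx : 1 ≤ x) :
    ‖exp (c * u) * u ^ (a - 1) * (1 - u / x) ^ (x - 1)‖
      ≤ exp 1 * (u ^ (a - 1) * exp (-(1 - s) * u)) := by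
  have hbase : 0 ≤ 1 - u / x := by
    rw [sub_nonneg, div_le_one (by linarith)]
    exact hux
  rw [norm_of_nonneg (by positivity)]
  calc exp (c * u) * u ^ (a - 1) * (1 - u / x) ^ (x - 1)
      ≤ exp (s * u) * u ^ (a - 1) * exp (1 - u) := by
        gcongr
        exact one_sub_div_rpow_sub_one_le_exp hux hx
    _ = exp 1 * (u ^ (a - 1) * exp (-(1 - s) * u)) := by
        rw [show 1 - u = 1 + -(1 - s) * u + -(s * u) by ring, exp_add, exp_add, exp_neg]
        field_simp

lemma integral_exp_mul_rpow_mul_exp_neg_Ioi {a t : ℝ} (ha : 0 < a) (ht : t < 1) :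
    ∫ u in Ioi 0, exp (t * u) * u ^ (a - 1) * exp (-u) = (1 / (1 - t)) ^ a * Gamma a := by
  rw [← integral_rpow_mul_exp_neg_mul_Ioi ha (sub_pos.2 ht)]
  refine setIntegral_congr_fun measurableSet_Ioi fun u _ => ?_
  rw [mul_right_comm, mul_comm, ← exp_add]
  ring_nf

lemma tendsto_setIntegral_exp_mul_rpow_mul_one_sub_div_rpow {a t : ℝ} (ha : 0 < a)
    (ht : t < 1) {ts : ℕ → ℝ} (hts : Tendsto ts atTop (𝓝 t)) :
    Tendsto (fun n : ℕ => ∫ u in Ioo 0 (n : ℝ),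
        exp (ts n * u) * u ^ (a - 1) * (1 - u / n) ^ ((n : ℝ) - 1))
      atTop (𝓝 ((1 / (1 - t)) ^ a * Gamma a)) := by
  obtain ⟨s, hts_lt, hs1⟩ := exists_between ht
  set f : ℕ → ℝ → ℝ := fun n u => exp (ts n * u) * u ^ (a - 1) * (1 - u / n) ^ ((n : ℝ) - 1)
  have hf (n : ℕ) :
      ∫ u in Ioo 0 (n : ℝ), f n u = ∫ u in Ioi 0, (Ioo 0 (n : ℝ)).indicator (f n) u := by
    rw [setIntegral_indicator measurableSet_Ioo,
      inter_eq_self_of_subset_right Ioo_subset_Ioi_self]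
  rw [tendsto_congr hf, ← integral_exp_mul_rpow_mul_exp_neg_Ioi ha ht]
  refine tendsto_integral_filter_of_dominated_convergence
    (fun u => exp 1 * (u ^ (a - 1) * exp (-(1 - s) * u))) ?_ ?_ ?_ ?_
  · exact .of_forall fun n =>
      ((by fun_prop : Measurable (f n)).indicator measurableSet_Ioo).aestronglyMeasurable
  · filter_upwards [hts.eventually (eventually_le_nhds hts_lt), eventually_ge_atTop 1]
      with n hn hn1
    filter_upwards [ae_restrict_mem measurableSet_Ioi] with u (hu : 0 < u)
    rw [norm_indicator_eq_indicator_norm]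
    exact indicator_apply_le' (fun hun => norm_exp_mul_rpow_mul_one_sub_div_rpow_le hn hu
      hun.2.le (by exact_mod_cast hn1)) (fun _ => by positivity)
  · simpa only [rpow_one] using
      (integrableOn_rpow_mul_exp_neg_mul_rpow (by linarith) one_pos (sub_pos.2 hs1)).const_mul _
  · filter_upwards [ae_restrict_mem measurableSet_Ioi] with u hu
    have hfu : Tendsto (fun n : ℕ => f n u) atTop (𝓝 (exp (t * u) * u ^ (a - 1) * exp (-u))) :=
      (((continuous_exp.tendsto _).comp (hts.mul_const u)).mul_const _).mul
        ((tendsto_one_sub_div_rpow_sub_one_atTop u).comp tendsto_natCast_atTop_atTop)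
    refine hfu.congr' ?_
    filter_upwards [tendsto_natCast_atTop_atTop.eventually_gt_atTop u] with n hn
    exact (indicator_of_mem (mem_Ioo.2 ⟨hu, hn⟩) (f n)).symm

/-- If `Vₙ ~ Beta(a,n)` with `a > 0` and `tₙ → t ∈ [0,1)`, then `E e^{n tₙ Vₙ} → (1-t)^{-a}`,
where `E e^{n tₙ Vₙ}` is the ratio of the integrals `∫₀¹ e^{n tₙ v} v^{a-1}(1-v)^{n-1} dv`
and `∫₀¹ v^{a-1}(1-v)^{n-1} dv`. -/
theorem beta_mgf_limit (a : ℝ) (ha : 0 < a) (t : ℝ) (ht : t ∈ Set.Ico (0 : ℝ) 1)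
    (ts : ℕ → ℝ) (hts : Tendsto ts atTop (nhds t)) :
    Tendsto (fun n : ℕ =>
        (∫ v in Set.Ioo (0:ℝ) 1, Real.exp (n * ts n * v) * v ^ (a - 1) * (1 - v) ^ ((n:ℝ) - 1))
          / (∫ v in Set.Ioo (0:ℝ) 1, v ^ (a - 1) * (1 - v) ^ ((n:ℝ) - 1)))
      atTop (nhds ((1 - t) ^ (-a))) := by
  have hnum := tendsto_setIntegral_exp_mul_rpow_mul_one_sub_div_rpow ha ht.2 hts
  have hden := tendsto_setIntegral_exp_mul_rpow_mul_one_sub_div_rpow (ts := fun _ => 0) ha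
    one_pos tendsto_const_nhds
  have hΓ : Gamma a ≠ 0 := (Gamma_pos_of_pos ha).ne'
  have hratio := hnum.div hden (by simp [hΓ])
  rw [sub_zero, div_one, one_rpow, one_mul, mul_div_cancel_right₀ _ hΓ, one_div,
    inv_rpow (by linarith [ht.2]), ← rpow_neg (by linarith [ht.2])] at hratio
  refine hratio.congr' ?_
  filter_upwards [eventually_gt_atTop 0] with n hn
  have hx : (0 : ℝ) < n := Nat.cast_pos.2 hn
  rw [Pi.div_apply, ← rpow_mul_setIntegral_exp_mul_beta_kernel _ _ hx,
    ← rpow_mul_setIntegral_exp_mul_beta_kernel _ _ hx,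
    mul_div_mul_left _ _ (rpow_pos_of_pos hx a).ne']
  simp only [mul_zero, zero_mul, exp_zero, one_mul]
end

section
/- For any $\sigma, \tau > 0$, the bounded Lipschitz distance between the normal laws $N(0,\sigma^2)$ and $N(0,\tau^2)$ satisfies $d_{BL}(N(0,\sigma^2), N(0,\tau^2)) \le \sqrt{|\sigma^2 - \tau^2|}$. -/
/-!
Writing `N(0, s²)` as the law of `|s| X` with `X ~ N(0, 1)` couples the two Gaussians, so for a
`1`-Lipschitz `f` the difference of the integrals is at most `||σ| - |τ|| E|X|`. Since `|X|` has
nonnegative variance, `E|X| ≤ √(E X²) = 1`; finally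
`||σ| - |τ||² ≤ ||σ| - |τ|| (|σ| + |τ|) = |σ² - τ²|`.
-/

open MeasureTheory ProbabilityTheory Real

open scoped NNReal

theorem LipschitzWith.integrable_comp {α E F : Type*} [MeasurableSpace α] {μ : Measure α}
    [IsFiniteMeasure μ] [NormedAddCommGroup E] [NormedAddCommGroup F] {K : ℝ≥0} {f : E → F}
    (hf : LipschitzWith K f) {X : α → E} (hX : Integrable X μ) :
    Integrable (fun ω ↦ f (X ω)) μ := by
  refine ((integrable_const ‖f 0‖).add (hX.norm.const_mul K)).mono'
    (hf.continuous.comp_aestronglyMeasurable hX.1) (ae_of_all _ fun ω ↦ ?_)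
  simpa using (norm_le_insert' (f (X ω)) (f 0)).trans
    (add_le_add_right (hf.norm_sub_le (X ω) 0) _)

theorem LipschitzWith.norm_integral_comp_sub_le {α E F : Type*} [MeasurableSpace α]
    {μ : Measure α} [IsFiniteMeasure μ] [NormedAddCommGroup E] [NormedAddCommGroup F]
    [NormedSpace ℝ F] {K : ℝ≥0} {f : E → F} (hf : LipschitzWith K f) {X Y : α → E}
    (hX : Integrable X μ) (hY : Integrable Y μ) :
    ‖∫ ω, f (X ω) ∂μ - ∫ ω, f (Y ω) ∂μ‖ ≤
      K * ∫ ω, ‖X ω - Y ω‖ ∂μ := by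
  rw [← integral_sub (hf.integrable_comp hX) (hf.integrable_comp hY), ← integral_const_mul]
  exact norm_integral_le_of_norm_le ((hX.sub hY).norm.const_mul _)
    (ae_of_all _ fun ω ↦ hf.norm_sub_le (X ω) (Y ω))

theorem integral_abs_le_sqrt_integral_sq {Ω : Type*} [MeasurableSpace Ω] {μ : Measure Ω}
    [IsProbabilityMeasure μ] {X : Ω → ℝ} (hX : MemLp X 2 μ) :
    ∫ ω, |X ω| ∂μ ≤ √(∫ ω, X ω ^ 2 ∂μ) := by
  have hvar := variance_nonneg (fun ω ↦ |X ω|) μ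
  rw [variance_eq_sub (X := fun ω ↦ |X ω|) hX.abs] at hvar
  simp only [Pi.pow_apply, sq_abs] at hvar
  exact le_sqrt_of_sq_le (by linarith)

theorem integral_abs_gaussianReal_le_sqrt (v : ℝ≥0) :
    ∫ x, |x| ∂gaussianReal 0 v ≤ √v := by
  have h := integral_abs_le_sqrt_integral_sq (memLp_id_gaussianReal (μ := 0) (v := v) 2)
  rwa [← variance_of_integral_eq_zero measurable_id.aemeasurable integral_id_gaussianReal,
    variance_id_gaussianReal] at h

theorem gaussianReal_toNNReal_sq_eq_map_abs_mul (s : ℝ) :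
    gaussianReal 0 (s ^ 2).toNNReal = (gaussianReal 0 1).map (|s| * ·) := by
  rw [gaussianReal_map_const_mul, mul_zero, mul_one]
  congr
  ext
  simp [sq_nonneg]

theorem abs_abs_sub_abs_le_sqrt_abs_sq_sub (a b : ℝ) : |(|a| - |b|)| ≤ √|a ^ 2 - b ^ 2| := by
  rw [← sqrt_sq_eq_abs, ← sq_abs a, ← sq_abs b]
  refine sqrt_le_sqrt ?_
  have ha := abs_nonneg a
  have hb := abs_nonneg b
  generalize |a| = x at *
  generalize |b| = y at *
  rcases le_total x y with h | h
  · rw [abs_of_nonpos (by nlinarith)]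
    nlinarith
  · rw [abs_of_nonneg (by nlinarith)]
    nlinarith

theorem boundedLipschitz_dist_gaussians_general (σ τ : ℝ) :
    ∀ f : ℝ → ℝ, (∀ x, |f x| ≤ 1) → LipschitzWith 1 f →
      |(∫ x, f x ∂(gaussianReal 0 (Real.toNNReal (σ ^ 2))))
          - ∫ x, f x ∂(gaussianReal 0 (Real.toNNReal (τ ^ 2)))|
        ≤ Real.sqrt |σ ^ 2 - τ ^ 2| := by
  intro f _ hf
  have hint : Integrable id (gaussianReal 0 1) := (memLp_id_gaussianReal 1).integrable le_rfl
  rw [gaussianReal_toNNReal_sq_eq_map_abs_mul, gaussianReal_toNNReal_sq_eq_map_abs_mul,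
    integral_map (by fun_prop) hf.continuous.aestronglyMeasurable,
    integral_map (by fun_prop) hf.continuous.aestronglyMeasurable, ← Real.norm_eq_abs]
  calc _ ≤ 1 * ∫ x, ‖|σ| * x - |τ| * x‖ ∂gaussianReal 0 1 :=
        hf.norm_integral_comp_sub_le (hint.const_mul _) (hint.const_mul _)
    _ = |(|σ| - |τ|)| * ∫ x, |x| ∂gaussianReal 0 1 := by
        simp only [one_mul, ← sub_mul, Real.norm_eq_abs, abs_mul, integral_const_mul]
    _ ≤ |(|σ| - |τ|)| := by
        refine mul_le_of_le_one_right (abs_nonneg _) ?_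
        simpa using integral_abs_gaussianReal_le_sqrt 1
    _ ≤ √|σ ^ 2 - τ ^ 2| := abs_abs_sub_abs_le_sqrt_abs_sq_sub σ τ

/-- The bounded Lipschitz distance between `N(0,σ²)` and `N(0,τ²)` is at most `√|σ² - τ²|`:
for every `f` bounded by `1` and `1`-Lipschitz,
`|∫ f dN(0,σ²) - ∫ f dN(0,τ²)| ≤ √|σ² - τ²|`. -/
theorem boundedLipschitz_dist_gaussians (σ τ : ℝ) (hσ : 0 < σ) (hτ : 0 < τ) :
    ∀ f : ℝ → ℝ, (∀ x, |f x| ≤ 1) → LipschitzWith 1 f →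
      |(∫ x, f x ∂(gaussianReal 0 (Real.toNNReal (σ ^ 2))))
          - ∫ x, f x ∂(gaussianReal 0 (Real.toNNReal (τ ^ 2)))|
        ≤ Real.sqrt |σ ^ 2 - τ ^ 2| :=
  boundedLipschitz_dist_gaussians_general σ τ
end

section
/- Let $Q \sim \mathrm{DP}(\nu)$ be a Dirichlet process with finite base measure $\nu \ne 0$ on a measurable space, and let $G \ge 0$ be measurable with $\int e^{tG}\,d\nu < \infty$. Then $\mathbb{E}\, e^{t\, QG} \le \int e^{tG}\,d\nu / |\nu|$ for every $t \ge 0$, where $|\nu| = \nu(\mathcal{X})$ and $QG = \int G \, dQ$. -/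
open MeasureTheory Real

/-!
Pointwise, Jensen's inequality for `exp` gives `exp (t · QG) ≤ Q (exp (t G))`, so it suffices to
extend the mean formula `E[Qf] = νf / |ν|` from `ν`-integrable `f` to the nonnegative function
`f = exp (t G)`, read in `ℝ≥0∞`. Monotone convergence along the truncations `min f n` reduces this
to bounded `f`. Nothing is assumed about measurability in `ω`, yet for bounded `f` the variable
`ω ↦ Q ω f` is integrable: otherwise its Bochner integral would be `0`, whereas the mean formula
applied to `f` shifted to be `≥ 1` gives a positive value.
-/

lemma ofReal_integral_le_lintegral_ofReal {α : Type*} [MeasurableSpace α] {μ : Measure α}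
    {f : α → ℝ} (hf : 0 ≤ f) :
    ENNReal.ofReal (∫ x, f x ∂μ) ≤ ∫⁻ x, ENNReal.ofReal (f x) ∂μ := by
  simpa only [enorm_eq_ofReal (hf _), enorm_eq_ofReal (integral_nonneg hf)]
    using enorm_integral_le_lintegral_enorm f

lemma ofReal_integral_div_toReal_measure_univ {α : Type*} [MeasurableSpace α] {μ : Measure α}
    [IsFiniteMeasure μ] {f : α → ℝ} (hfi : Integrable f μ) (hf : 0 ≤ f) :
    ENNReal.ofReal ((∫ x, f x ∂μ) / (μ Set.univ).toReal)
      = (∫⁻ x, ENNReal.ofReal (f x) ∂μ) / μ Set.univ := by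
  rcases eq_zero_or_neZero μ with rfl | _
  · simp
  rw [ENNReal.ofReal_div_of_pos (y := (μ Set.univ).toReal) measureReal_univ_pos, ENNReal.ofReal_toReal (measure_ne_top μ _),
    ofReal_integral_eq_lintegral_ofReal hfi (ae_of_all _ hf)]

lemma ofReal_exp_integral_le_lintegral_ofReal_exp {α : Type*} [MeasurableSpace α]
    {μ : Measure α} [IsProbabilityMeasure μ] {f : α → ℝ} (hf : AEStronglyMeasurable f μ)
    (hf0 : 0 ≤ᵐ[μ] f) :
    ENNReal.ofReal (exp (∫ x, f x ∂μ)) ≤ ∫⁻ x, ENNReal.ofReal (exp (f x)) ∂μ := by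
  have hexp0 : 0 ≤ᵐ[μ] fun x => exp (f x) := ae_of_all _ fun x => (exp_pos _).le
  by_cases hexp : Integrable (fun x => exp (f x)) μ
  · have hfi : Integrable f μ := hexp.mono' hf <| by
      filter_upwards [hf0] with x hx
      rw [norm_of_nonneg hx]
      linarith [add_one_le_exp (f x)]
    rw [← ofReal_integral_eq_lintegral_ofReal hexp hexp0]
    exact ENNReal.ofReal_le_ofReal <| convexOn_exp.map_integral_le continuous_exp.continuousOn
      isClosed_univ (ae_of_all _ fun _ => Set.mem_univ _) hfi hexp
  · rw [← lintegral_ofReal_ne_top_iff_integrable (continuous_exp.comp_aestronglyMeasurable hf)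
      hexp0, not_not] at hexp
    exact hexp ▸ le_top

lemma monotone_ofReal_min_natCast (a : ℝ) : Monotone fun n : ℕ => ENNReal.ofReal (min a n) :=
  fun _ _ hmn => ENNReal.ofReal_le_ofReal (min_le_min_left _ (Nat.cast_le.mpr hmn))

lemma iSup_ofReal_min_natCast (a : ℝ) :
    ⨆ n : ℕ, ENNReal.ofReal (min a n) = ENNReal.ofReal a := by
  refine le_antisymm (iSup_le fun n => ENNReal.ofReal_le_ofReal (min_le_left _ _)) ?_
  calc ENNReal.ofReal a = ENNReal.ofReal (min a ⌈a⌉₊) := by rw [min_eq_left (Nat.le_ceil a)]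
    _ ≤ ⨆ n : ℕ, ENNReal.ofReal (min a n) := le_iSup (fun n : ℕ => ENNReal.ofReal (min a n)) _

lemma lintegral_ofReal_eq_iSup_min_natCast {α : Type*} [MeasurableSpace α] (μ : Measure α)
    {f : α → ℝ} (hf : Measurable f) :
    ∫⁻ x, ENNReal.ofReal (f x) ∂μ = ⨆ n : ℕ, ∫⁻ x, ENNReal.ofReal (min (f x) n) ∂μ := by
  rw [← lintegral_iSup (fun n => (hf.min measurable_const).ennreal_ofReal)
    fun _ _ hmn x => monotone_ofReal_min_natCast (f x) hmn]
  simp_rw [iSup_ofReal_min_natCast]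

section MeanMeasure

variable {Ω X : Type*} [MeasurableSpace Ω] [MeasurableSpace X]

def HasNormalizedMeanMeasure (P : Measure Ω) (Q : Ω → Measure X) (ν : Measure X) : Prop :=
  ∀ f : X → ℝ, Measurable f → Integrable f ν →
    ∫ ω, (∫ x, f x ∂(Q ω)) ∂P = (∫ x, f x ∂ν) / (ν Set.univ).toReal

variable {P : Measure Ω} {Q : Ω → Measure X} {ν : Measure X}

lemma HasNormalizedMeanMeasure.integrable_integral_of_ne_zero
    (hmean : HasNormalizedMeanMeasure P Q ν) {f : X → ℝ} (hf : Measurable f)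
    (hfν : Integrable f ν) (hmean_ne : (∫ x, f x ∂ν) / (ν Set.univ).toReal ≠ 0) :
    Integrable (fun ω => ∫ x, f x ∂(Q ω)) P := by
  by_contra h
  exact hmean_ne (hmean f hf hfν ▸ integral_undef h)

lemma HasNormalizedMeanMeasure.integrable_integral_of_bounded [IsFiniteMeasure P]
    [IsFiniteMeasure ν] [NeZero ν] (hQ : ∀ ω, IsProbabilityMeasure (Q ω))
    (hmean : HasNormalizedMeanMeasure P Q ν) {f : X → ℝ} (hf : Measurable f) {C : ℝ}
    (hfC : ∀ x, ‖f x‖ ≤ C) :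
    Integrable (fun ω => ∫ x, f x ∂(Q ω)) P := by
  have hint : ∀ μ : Measure X, IsFiniteMeasure μ → Integrable f μ :=
    fun μ _ => .of_bound hf.aestronglyMeasurable C (ae_of_all _ hfC)
  set g : X → ℝ := fun x => f x + (C + 1)
  have hg_one : ∀ x, 1 ≤ g x := fun x => by
    have := neg_le_of_abs_le (hfC x)
    simp only [g]
    linarith
  have hgν : Integrable g ν := (hint ν inferInstance).add (integrable_const _)
  have hg_pos : 0 < (∫ x, g x ∂ν) / (ν Set.univ).toReal := by
    refine div_pos ((measureReal_univ_pos (μ := ν)).trans_le ?_) measureReal_univ_pos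
    calc ν.real Set.univ = ∫ _, (1 : ℝ) ∂ν := by simp
      _ ≤ ∫ x, g x ∂ν := integral_mono (integrable_const 1) hgν hg_one
  have hgQ := hmean.integrable_integral_of_ne_zero (hf.add measurable_const) hgν hg_pos.ne'
  refine (hgQ.sub (integrable_const (C + 1))).congr (ae_of_all _ fun ω => ?_)
  have := hQ ω
  simp [integral_add (hint (Q ω) inferInstance) (integrable_const _)]

lemma HasNormalizedMeanMeasure.lintegral_lintegral_ofReal_of_bounded [IsFiniteMeasure P]
    [IsFiniteMeasure ν] [NeZero ν] (hQ : ∀ ω, IsProbabilityMeasure (Q ω))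
    (hmean : HasNormalizedMeanMeasure P Q ν) {f : X → ℝ} (hf : Measurable f) (hf0 : 0 ≤ f)
    {C : ℝ} (hfC : ∀ x, ‖f x‖ ≤ C) :
    ∫⁻ ω, ∫⁻ x, ENNReal.ofReal (f x) ∂(Q ω) ∂P
      = (∫⁻ x, ENNReal.ofReal (f x) ∂ν) / ν Set.univ := by
  have hint : ∀ μ : Measure X, IsFiniteMeasure μ → Integrable f μ :=
    fun μ _ => .of_bound hf.aestronglyMeasurable C (ae_of_all _ hfC)
  have hQf : ∀ ω, ∫⁻ x, ENNReal.ofReal (f x) ∂(Q ω) = ENNReal.ofReal (∫ x, f x ∂(Q ω)) :=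
    fun ω => by
      have := hQ ω
      rw [ofReal_integral_eq_lintegral_ofReal (hint _ inferInstance) (ae_of_all _ hf0)]
  simp_rw [hQf]
  rw [← ofReal_integral_eq_lintegral_ofReal (hmean.integrable_integral_of_bounded hQ hf hfC)
      (ae_of_all _ fun ω => integral_nonneg hf0), hmean f hf (hint ν inferInstance),
    ofReal_integral_div_toReal_measure_univ (hint ν inferInstance) hf0]

lemma HasNormalizedMeanMeasure.lintegral_lintegral_ofReal [IsFiniteMeasure P]
    [IsFiniteMeasure ν] [NeZero ν] (hQ : ∀ ω, IsProbabilityMeasure (Q ω))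
    (hmean : HasNormalizedMeanMeasure P Q ν) {f : X → ℝ} (hf : Measurable f) (hf0 : 0 ≤ f) :
    ∫⁻ ω, ∫⁻ x, ENNReal.ofReal (f x) ∂(Q ω) ∂P
      = (∫⁻ x, ENNReal.ofReal (f x) ∂ν) / ν Set.univ := by
  have hfn : ∀ n : ℕ, Measurable fun x => min (f x) n := fun n => hf.min measurable_const
  have hfn0 : ∀ n : ℕ, 0 ≤ fun x => min (f x) n := fun n x => le_min (hf0 x) n.cast_nonneg
  have hfn_bound : ∀ (n : ℕ) x, ‖min (f x) n‖ ≤ n := fun n x => by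
    rw [norm_of_nonneg (hfn0 n x)]
    exact min_le_right _ _
  have hmeas : ∀ n : ℕ,
      AEMeasurable (fun ω => ∫⁻ x, ENNReal.ofReal (min (f x) n) ∂(Q ω)) P := fun n => by
    refine ((hmean.integrable_integral_of_bounded hQ (hfn n) (hfn_bound n)).aemeasurable
      |>.ennreal_ofReal).congr (ae_of_all _ fun ω => ?_)
    have := hQ ω
    exact ofReal_integral_eq_lintegral_ofReal
      (.of_bound (hfn n).aestronglyMeasurable _ (ae_of_all _ (hfn_bound n))) (ae_of_all _ (hfn0 n))
  calc ∫⁻ ω, ∫⁻ x, ENNReal.ofReal (f x) ∂(Q ω) ∂P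
      = ∫⁻ ω, ⨆ n : ℕ, ∫⁻ x, ENNReal.ofReal (min (f x) n) ∂(Q ω) ∂P := by
        simp_rw [lintegral_ofReal_eq_iSup_min_natCast _ hf]
    _ = ⨆ n : ℕ, ∫⁻ ω, ∫⁻ x, ENNReal.ofReal (min (f x) n) ∂(Q ω) ∂P :=
        lintegral_iSup' hmeas (ae_of_all _ fun ω _ _ hmn =>
          lintegral_mono fun x => monotone_ofReal_min_natCast (f x) hmn)
    _ = ⨆ n : ℕ, (∫⁻ x, ENNReal.ofReal (min (f x) n) ∂ν) / ν Set.univ := by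
        simp_rw [hmean.lintegral_lintegral_ofReal_of_bounded hQ (hfn _) (hfn0 _) (hfn_bound _)]
    _ = (∫⁻ x, ENNReal.ofReal (f x) ∂ν) / ν Set.univ := by
        rw [← ENNReal.iSup_div, lintegral_ofReal_eq_iSup_min_natCast _ hf]

end MeanMeasure

/-- Jensen bound for the Dirichlet process: if `Q` is a random probability measure (e.g. a
Dirichlet process `DP(ν)`) whose mean measure is `ν/|ν|`, i.e. `E[Qf] = νf/|ν|` for every
`ν`-integrable measurable `f`, and `G ≥ 0` is measurable with `∫ e^{tG} dν < ∞`, then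
`E e^{t QG} ≤ (∫ e^{tG} dν)/|ν|` for every `t ≥ 0`. -/
theorem dirichlet_process_exp_moment_bound
    {Ω : Type*} [MeasurableSpace Ω] (P : Measure Ω) [IsProbabilityMeasure P]
    {X : Type*} [MeasurableSpace X] (ν : Measure X) [IsFiniteMeasure ν] (hν : ν ≠ 0)
    (Q : Ω → Measure X) (hQprob : ∀ ω, IsProbabilityMeasure (Q ω))
    (hmean : ∀ f : X → ℝ, Measurable f → Integrable f ν →
      ∫ ω, (∫ x, f x ∂(Q ω)) ∂P = (∫ x, f x ∂ν) / (ν Set.univ).toReal)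
    (G : X → ℝ) (hG : Measurable G) (hGpos : ∀ x, 0 ≤ G x)
    (t : ℝ) (ht : 0 ≤ t)
    (hInt : Integrable (fun x => Real.exp (t * G x)) ν) :
    ∫ ω, Real.exp (t * ∫ x, G x ∂(Q ω)) ∂P
      ≤ (∫ x, Real.exp (t * G x) ∂ν) / (ν Set.univ).toReal := by
  have : NeZero ν := ⟨hν⟩
  have hexp0 : 0 ≤ fun x => exp (t * G x) := fun x => (exp_pos _).le
  have hjensen : ∀ ω, ENNReal.ofReal (exp (t * ∫ x, G x ∂(Q ω)))
      ≤ ∫⁻ x, ENNReal.ofReal (exp (t * G x)) ∂(Q ω) := fun ω => by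
    have := hQprob ω
    rw [← integral_const_mul]
    exact ofReal_exp_integral_le_lintegral_ofReal_exp (hG.const_mul t).aestronglyMeasurable
      (ae_of_all _ fun x => mul_nonneg ht (hGpos x))
  refine (ENNReal.ofReal_le_ofReal_iff
    (div_nonneg (integral_nonneg hexp0) ENNReal.toReal_nonneg)).mp ?_
  calc ENNReal.ofReal (∫ ω, exp (t * ∫ x, G x ∂(Q ω)) ∂P)
      ≤ ∫⁻ ω, ENNReal.ofReal (exp (t * ∫ x, G x ∂(Q ω))) ∂P :=
        ofReal_integral_le_lintegral_ofReal fun _ => (exp_pos _).le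
    _ ≤ ∫⁻ ω, ∫⁻ x, ENNReal.ofReal (exp (t * G x)) ∂(Q ω) ∂P := lintegral_mono hjensen
    _ = (∫⁻ x, ENNReal.ofReal (exp (t * G x)) ∂ν) / ν Set.univ :=
        HasNormalizedMeanMeasure.lintegral_lintegral_ofReal hQprob hmean (hG.const_mul t).exp hexp0
    _ = ENNReal.ofReal ((∫ x, exp (t * G x) ∂ν) / (ν Set.univ).toReal) :=
        (ofReal_integral_div_toReal_measure_univ hInt hexp0).symm
end
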